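/- Let T be a contraction on a complex separable Hilbert space H. The following are equivalent: (i) for every bounded backward sequence {xₙ} of T, the sequence of norms {‖xₙ‖} is constant; (ii) there exists a closed subspace H₂ of H reducing T (i.e. invariant under both T and T*) such that T|_{H₂} is unitary and T|_{H₂^⊥} is of class C_{·0} (i.e. the nonunitary part of T is of class C_{·0}). -/

import Mathlib

/-!
Let `H₂` be the set of starting points of bounded backward sequences of `T`. If all bounded
backward sequences have constant norm, then `H₂` is closed (backward sequences of a Cauchy
sequence of starting points converge termwise), `T` is an isometry of `H₂` onto itself, and
`T* x` is the next term of a backward sequence from `x`, since `‖T*‖ ≤ 1` and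
`⟪T* x, x₁⟫ = ‖x‖² = ‖x₁‖²`. For the `C·₀` part, let `A` be the weak limit of `Tᵏ T*ᵏ`, i.e.
`⟪A z, y⟫ = lim ⟪T*ᵏ z, T*ᵏ y⟫`, which exists by polarization since each `‖T*ᵏ w‖` decreases.
Then `T A T* = A`, so `(A T*ⁿ x)ₙ` is a bounded backward sequence and `A x ∈ H₂`; for `x ⊥ H₂`
this gives `lim ‖T*ᵏ x‖² = ⟪A x, x⟫ = 0`.

Conversely, the orthogonal projection onto `H₂ᗮ` commutes with `T`, so it maps a bounded
backward sequence `(xₙ)` to one, `(vₙ)`, in `H₂ᗮ`, whose terms satisfy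
`‖vₙ‖² = ⟪vₙ₊ₖ, T*ᵏ vₙ⟫ ≤ C ‖T*ᵏ vₙ‖ → 0`. Hence every `xₙ` lies in `H₂`, where `T` is isometric.
-/

open Filter ContinuousLinearMap Topology InnerProductSpace

section Normed

variable {R E : Type*} [Semiring R] [SeminormedAddCommGroup E] [Module R E] {S : E →L[R] E}

lemma antitone_norm_pow_apply (hS : ∀ x, ‖S x‖ ≤ ‖x‖) (z : E) :
    Antitone fun k => ‖(S ^ k) z‖ :=
  antitone_nat_of_succ_le fun k => by
    rw [pow_succ']
    exact hS ((S ^ k) z)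

lemma norm_pow_apply_le (hS : ∀ x, ‖S x‖ ≤ ‖x‖) (k : ℕ) (z : E) : ‖(S ^ k) z‖ ≤ ‖z‖ := by
  simpa using antitone_norm_pow_apply hS z k.zero_le

lemma tendsto_norm_pow_apply (hS : ∀ x, ‖S x‖ ≤ ‖x‖) (z : E) :
    Tendsto (fun k => ‖(S ^ k) z‖) atTop (𝓝 (⨅ k, ‖(S ^ k) z‖)) :=
  tendsto_atTop_ciInf (antitone_norm_pow_apply hS z) ⟨0, by rintro _ ⟨k, rfl⟩; positivity⟩

lemma tendsto_norm_pow_apply_zero_of_liminf (hS : ∀ x, ‖S x‖ ≤ ‖x‖) {z : E}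
    (h : liminf (fun k => ‖(S ^ k) z‖) atTop = 0) :
    Tendsto (fun k => ‖(S ^ k) z‖) atTop (𝓝 0) := by
  have hlim := tendsto_norm_pow_apply hS z
  rwa [← hlim.liminf_eq, h] at hlim

end Normed

section InnerProduct

variable {𝕜 E : Type*} [RCLike 𝕜] [NormedAddCommGroup E] [InnerProductSpace 𝕜 E]
  {S : E →L[𝕜] E}

lemma exists_tendsto_inner_pow_apply (hS : ∀ x, ‖S x‖ ≤ ‖x‖) (z y : E) :
    ∃ L : 𝕜, Tendsto (fun k => ⟪(S ^ k) z, (S ^ k) y⟫_𝕜) atTop (𝓝 L) := by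
  have hsq : ∀ w : E, Tendsto (fun k => (‖(S ^ k) w‖ : 𝕜) ^ 2) atTop
      (𝓝 (((⨅ k, ‖(S ^ k) w‖ : ℝ) : 𝕜) ^ 2)) := fun w =>
    (((RCLike.continuous_ofReal (K := 𝕜)).tendsto _).comp (tendsto_norm_pow_apply hS w)).pow 2
  refine ⟨_, (((hsq (z + y)).sub (hsq (z - y))).add
    (((hsq (z - (RCLike.I : 𝕜) • y)).sub (hsq (z + (RCLike.I : 𝕜) • y))).mul_const
      RCLike.I)).div_const 4 |>.congr fun k => ?_⟩
  rw [inner_eq_sum_norm_sq_div_four]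
  simp only [map_add, map_sub, map_smul]

variable [CompleteSpace E]

lemma exists_forall_tendsto_inner_pow_apply (hS : ∀ x, ‖S x‖ ≤ ‖x‖) (z : E) :
    ∃ w : E, ‖w‖ ≤ ‖z‖ ∧
      ∀ y, Tendsto (fun k => ⟪(S ^ k) z, (S ^ k) y⟫_𝕜) atTop (𝓝 ⟪w, y⟫_𝕜) := by
  choose L hL using exists_tendsto_inner_pow_apply hS z
  let f : E →L[𝕜] 𝕜 :=
    continuousLinearMapOfTendsto (fun k => (innerSL 𝕜 ((S ^ k) z)).comp (S ^ k))
      (tendsto_pi_nhds.mpr hL)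
  have hf : ∀ y, f y = L y := fun _ => rfl
  refine ⟨(toDual 𝕜 E).symm f, ?_, fun y => by rw [toDual_symm_apply, hf]; exact hL y⟩
  rw [LinearIsometryEquiv.norm_map]
  refine f.opNorm_le_bound (norm_nonneg z) fun y => le_of_tendsto (hL y).norm
    (Eventually.of_forall fun k => ?_)
  calc ‖⟪(S ^ k) z, (S ^ k) y⟫_𝕜‖ ≤ ‖(S ^ k) z‖ * ‖(S ^ k) y‖ := norm_inner_le_norm _ _
    _ ≤ ‖z‖ * ‖y‖ := by gcongr <;> exact norm_pow_apply_le hS k _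

end InnerProduct

section Backward

variable {𝕜 E : Type*} [NontriviallyNormedField 𝕜] [NormedAddCommGroup E] [NormedSpace 𝕜 E]
  {T : E →L[𝕜] E} {xs ys : ℕ → E}

structure IsBoundedBackwardSeq (T : E →L[𝕜] E) (xs : ℕ → E) : Prop where
  apply_succ : ∀ n, T (xs (n + 1)) = xs n
  bounded : ∃ C, ∀ n, ‖xs n‖ ≤ C

namespace IsBoundedBackwardSeq

lemma zero : IsBoundedBackwardSeq T 0 :=
  ⟨fun n => by simp, 0, fun n => by simp⟩

lemma add (hxs : IsBoundedBackwardSeq T xs) (hys : IsBoundedBackwardSeq T ys) :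
    IsBoundedBackwardSeq T (xs + ys) := by
  obtain ⟨C, hC⟩ := hxs.bounded
  obtain ⟨D, hD⟩ := hys.bounded
  exact ⟨fun n => by simp [hxs.apply_succ, hys.apply_succ], C + D,
    fun n => (norm_add_le _ _).trans (add_le_add (hC n) (hD n))⟩

lemma map {P : E →L[𝕜] E} (hP : Commute P T) (hxs : IsBoundedBackwardSeq T xs) :
    IsBoundedBackwardSeq T fun n => P (xs n) := by
  obtain ⟨C, hC⟩ := hxs.bounded
  refine ⟨fun n => ?_, ‖P‖ * C, fun n => (P.le_opNorm _).trans (by gcongr; exact hC n)⟩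
  rw [← mul_apply_eq_comp, ← hP.eq, mul_apply_eq_comp, hxs.apply_succ]

lemma smul (c : 𝕜) (hxs : IsBoundedBackwardSeq T xs) : IsBoundedBackwardSeq T (c • xs) :=
  hxs.map (P := c • 1) ((Commute.one_left T).smul_left c)

lemma sub (hxs : IsBoundedBackwardSeq T xs) (hys : IsBoundedBackwardSeq T ys) :
    IsBoundedBackwardSeq T (xs - ys) := by
  simpa [sub_eq_add_neg] using hxs.add (hys.smul (-1))

lemma shift (hxs : IsBoundedBackwardSeq T xs) (n : ℕ) :
    IsBoundedBackwardSeq T fun k => xs (n + k) := by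
  obtain ⟨C, hC⟩ := hxs.bounded
  exact ⟨fun k => hxs.apply_succ (n + k), C, fun k => hC (n + k)⟩

lemma pow_apply (hxs : IsBoundedBackwardSeq T xs) (k : ℕ) : (T ^ k) (xs k) = xs 0 := by
  induction k with
  | zero => rfl
  | succ k ih => rw [pow_succ, mul_apply_eq_comp, hxs.apply_succ, ih]

end IsBoundedBackwardSeq

def boundedBackwardSubmodule (T : E →L[𝕜] E) : Submodule 𝕜 E where
  carrier := {x | ∃ xs, IsBoundedBackwardSeq T xs ∧ xs 0 = x}
  add_mem' := by
    rintro _ _ ⟨xs, hxs, rfl⟩ ⟨ys, hys, rfl⟩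
    exact ⟨xs + ys, hxs.add hys, rfl⟩
  zero_mem' := ⟨0, .zero, rfl⟩
  smul_mem' := by
    rintro c _ ⟨xs, hxs, rfl⟩
    exact ⟨c • xs, hxs.smul c, rfl⟩

lemma IsBoundedBackwardSeq.mem (hxs : IsBoundedBackwardSeq T xs) (n : ℕ) :
    xs n ∈ boundedBackwardSubmodule T :=
  ⟨_, hxs.shift n, rfl⟩

lemma apply_mem_boundedBackwardSubmodule {x : E} (hx : x ∈ boundedBackwardSubmodule T) :
    T x ∈ boundedBackwardSubmodule T := by
  obtain ⟨xs, hxs, rfl⟩ := hx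
  exact (hxs.map (Commute.refl T)).mem 0

lemma exists_apply_eq_of_mem_boundedBackwardSubmodule {y : E}
    (hy : y ∈ boundedBackwardSubmodule T) : ∃ x ∈ boundedBackwardSubmodule T, T x = y := by
  obtain ⟨xs, hxs, rfl⟩ := hy
  exact ⟨xs 1, hxs.mem 1, hxs.apply_succ 0⟩

def NormConstOnBoundedBackwardSeqs (T : E →L[𝕜] E) : Prop :=
  ∀ xs, IsBoundedBackwardSeq T xs → ∀ n, ‖xs n‖ = ‖xs 0‖

lemma NormConstOnBoundedBackwardSeqs.norm_apply_eq (hT : NormConstOnBoundedBackwardSeqs T)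
    {x : E} (hx : x ∈ boundedBackwardSubmodule T) : ‖T x‖ = ‖x‖ := by
  obtain ⟨xs, hxs, rfl⟩ := hx
  simpa [hxs.apply_succ 0] using (hT _ (hxs.map (Commute.refl T)) 1).symm

lemma NormConstOnBoundedBackwardSeqs.isClosed [CompleteSpace E]
    (hT : NormConstOnBoundedBackwardSeqs T) : IsClosed (boundedBackwardSubmodule T : Set E) := by
  refine isSeqClosed_iff_isClosed.mp fun u p hu hup => ?_
  choose xs hxs hxs0 using hu
  have hdist : ∀ n j j', dist (xs j n) (xs j' n) = dist (u j) (u j') := fun n j j' => by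
    simpa [dist_eq_norm, hxs0] using hT _ ((hxs j).sub (hxs j')) n
  have hcauchy : ∀ n, CauchySeq fun j => xs j n := fun n => by
    have := hup.cauchySeq
    rw [Metric.cauchySeq_iff] at this ⊢
    simpa only [hdist] using this
  choose ys hys using fun n => cauchySeq_tendsto_of_complete (hcauchy n)
  refine ⟨ys, ⟨fun n => ?_, ‖p‖, fun n => ?_⟩, ?_⟩
  · exact tendsto_nhds_unique (((T.continuous.tendsto _).comp (hys (n + 1))).congr
      fun j => (hxs j).apply_succ n) (hys n)
  · refine le_of_eq (tendsto_nhds_unique (hys n).norm ?_)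
    simpa [hT _ (hxs _) n, hxs0] using hup.norm
  · exact tendsto_nhds_unique (hys 0) (by simpa [hxs0] using hup)

end Backward

section Adjoint

variable {𝕜 E : Type*} [RCLike 𝕜] [NormedAddCommGroup E] [InnerProductSpace 𝕜 E]
  [CompleteSpace E] {T : E →L[𝕜] E}

lemma norm_adjoint_apply_le (hT : ∀ x, ‖T x‖ ≤ ‖x‖) (x : E) : ‖adjoint T x‖ ≤ ‖x‖ := by
  have hT1 : ‖adjoint T‖ ≤ 1 := by
    rw [LinearIsometryEquiv.norm_map]
    exact T.opNorm_le_bound zero_le_one fun x => by simpa using hT x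
  simpa using (adjoint T).le_of_opNorm_le hT1 x

lemma adjoint_pow (k : ℕ) : adjoint (T ^ k) = adjoint T ^ k := by
  rw [← star_eq_adjoint, star_pow, star_eq_adjoint]

lemma adjoint_apply_eq_of_apply_eq (hT : ∀ x, ‖T x‖ ≤ ‖x‖) {x y : E} (hxy : T y = x)
    (hnorm : ‖y‖ = ‖x‖) : adjoint T x = y := by
  have hre : RCLike.re ⟪adjoint T x, y⟫_𝕜 = ‖x‖ ^ 2 := by
    rw [adjoint_inner_left, hxy, inner_self_eq_norm_sq]
  have hsq : ‖adjoint T x - y‖ ^ 2 ≤ 0 := by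
    rw [norm_sub_sq (𝕜 := 𝕜), hre, hnorm]
    nlinarith [norm_adjoint_apply_le hT x, norm_nonneg (adjoint T x)]
  rw [← sub_eq_zero, ← norm_eq_zero]
  exact pow_eq_zero_iff two_ne_zero |>.mp (le_antisymm hsq (sq_nonneg _))

lemma NormConstOnBoundedBackwardSeqs.adjoint_apply_mem (hT : ∀ x, ‖T x‖ ≤ ‖x‖)
    (hconst : NormConstOnBoundedBackwardSeqs T) {x : E} (hx : x ∈ boundedBackwardSubmodule T) :
    adjoint T x ∈ boundedBackwardSubmodule T := by
  obtain ⟨xs, hxs, rfl⟩ := hx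
  rw [adjoint_apply_eq_of_apply_eq hT (hxs.apply_succ 0) (hconst xs hxs 1)]
  exact hxs.mem 1

lemma apply_apply_adjoint_eq {A : E → E}
    (hA : ∀ z y, Tendsto (fun k => ⟪(adjoint T ^ k) z, (adjoint T ^ k) y⟫_𝕜) atTop
      (𝓝 ⟪A z, y⟫_𝕜)) (z : E) :
    T (A (adjoint T z)) = A z := by
  refine ext_inner_right 𝕜 fun v => ?_
  rw [← adjoint_inner_right]
  refine tendsto_nhds_unique ((hA (adjoint T z) (adjoint T v)).congr fun k => ?_)
    ((hA z v).comp (tendsto_add_atTop_nat 1))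
  simp only [Function.comp_apply, pow_succ, mul_apply_eq_comp]

lemma tendsto_norm_pow_adjoint_apply_of_mem_orthogonal (hT : ∀ x, ‖T x‖ ≤ ‖x‖) {x : E}
    (hx : x ∈ (boundedBackwardSubmodule T)ᗮ) :
    Tendsto (fun k => ‖(adjoint T ^ k) x‖) atTop (𝓝 0) := by
  choose A hA_norm hA using exists_forall_tendsto_inner_pow_apply (norm_adjoint_apply_le hT)
  have hAx : A x ∈ boundedBackwardSubmodule T := by
    have hseq : IsBoundedBackwardSeq T fun n => A ((adjoint T ^ n) x) :=
      ⟨fun n => by rw [pow_succ', mul_apply_eq_comp, apply_apply_adjoint_eq hA],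
        ‖x‖, fun n => (hA_norm _).trans (norm_pow_apply_le (norm_adjoint_apply_le hT) n x)⟩
    simpa using hseq.mem 0
  have hsq : Tendsto (fun k => ‖(adjoint T ^ k) x‖ ^ 2) atTop (𝓝 0) := by
    have h := (RCLike.continuous_re.tendsto _).comp (hA x x)
    rw [Submodule.inner_right_of_mem_orthogonal hAx hx, map_zero] at h
    simpa only [Function.comp_def, inner_self_eq_norm_sq] using h
  simpa using hsq.sqrt

end Adjoint

section Reducing

variable {𝕜 E : Type*} [RCLike 𝕜] [NormedAddCommGroup E] [InnerProductSpace 𝕜 E]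
  [CompleteSpace E] {T : E →L[𝕜] E} {xs : ℕ → E}

lemma IsBoundedBackwardSeq.eq_zero_of_tendsto (hxs : IsBoundedBackwardSeq T xs)
    (h : Tendsto (fun k => ‖(adjoint T ^ k) (xs 0)‖) atTop (𝓝 0)) : xs 0 = 0 := by
  obtain ⟨C, hC⟩ := hxs.bounded
  have hle : ∀ k, ‖xs 0‖ ^ 2 ≤ C * ‖(adjoint T ^ k) (xs 0)‖ := fun k =>
    calc ‖xs 0‖ ^ 2 = RCLike.re ⟪xs 0, xs 0⟫_𝕜 := (inner_self_eq_norm_sq _).symm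
      _ = RCLike.re ⟪xs k, (adjoint T ^ k) (xs 0)⟫_𝕜 := by
        rw [← adjoint_pow, adjoint_inner_right, hxs.pow_apply]
      _ ≤ ‖xs k‖ * ‖(adjoint T ^ k) (xs 0)‖ :=
        (RCLike.re_le_norm _).trans (norm_inner_le_norm _ _)
      _ ≤ C * ‖(adjoint T ^ k) (xs 0)‖ := by gcongr; exact hC k
  have hsq : ‖xs 0‖ ^ 2 ≤ 0 := by simpa using ge_of_tendsto' (h.const_mul C) hle
  rw [← norm_eq_zero]
  exact pow_eq_zero_iff two_ne_zero |>.mp (le_antisymm hsq (sq_nonneg _))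

variable {K : Submodule 𝕜 E} [K.HasOrthogonalProjection]

lemma commute_starProjection_of_reduces (hTK : ∀ x ∈ K, T x ∈ K)
    (hTK' : ∀ x ∈ K, adjoint T x ∈ K) : Commute K.starProjection T :=
  K.isIdempotentElem_starProjection.commute_iff.mpr
    ⟨by rwa [Submodule.range_starProjection],
      by rw [Submodule.ker_starProjection]; exact orthogonal_mem_invtSubmodule hTK'⟩

lemma IsBoundedBackwardSeq.mem_of_reduces (hxs : IsBoundedBackwardSeq T xs)
    (hTK : ∀ x ∈ K, T x ∈ K) (hTK' : ∀ x ∈ K, adjoint T x ∈ K)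
    (hC0 : ∀ x ∈ Kᗮ, Tendsto (fun k => ‖(adjoint T ^ k) x‖) atTop (𝓝 0)) (n : ℕ) : xs n ∈ K := by
  have hcomm : Commute Kᗮ.starProjection T := by
    rw [K.starProjection_orthogonal']
    exact (Commute.one_left T).sub_left (commute_starProjection_of_reduces hTK hTK')
  have h := ((hxs.map hcomm).shift n).eq_zero_of_tendsto (hC0 _ (Kᗮ.starProjection_apply_mem _))
  rwa [Submodule.starProjection_apply_eq_zero_iff, K.orthogonal_orthogonal] at h

end Reducing

theorem stmt_13_general
    {H : Type*} [NormedAddCommGroup H] [InnerProductSpace ℂ H] [CompleteSpace H]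
    (T : H →L[ℂ] H) (hT : ∀ x : H, ‖T x‖ ≤ ‖x‖) :
    (∀ xs : ℕ → H, (∀ n : ℕ, T (xs (n + 1)) = xs n) →
        (∃ C : ℝ, ∀ n : ℕ, ‖xs n‖ ≤ C) → ∀ n : ℕ, ‖xs n‖ = ‖xs 0‖) ↔
    (∃ H₂ : Submodule ℂ H, IsClosed (H₂ : Set H) ∧
        (∀ x ∈ H₂, T x ∈ H₂) ∧
        (∀ x ∈ H₂, ContinuousLinearMap.adjoint T x ∈ H₂) ∧
        (∀ x ∈ H₂, ‖T x‖ = ‖x‖) ∧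
        (∀ y ∈ H₂, ∃ x ∈ H₂, T x = y) ∧
        (∀ x ∈ H₂ᗮ, Filter.liminf
          (fun n : ℕ => ‖((ContinuousLinearMap.adjoint T) ^ n) x‖) Filter.atTop = 0)) := by
  constructor
  · intro h
    have hconst : NormConstOnBoundedBackwardSeqs T :=
      fun xs hxs => h xs hxs.apply_succ hxs.bounded
    exact ⟨boundedBackwardSubmodule T, hconst.isClosed,
      fun _ => apply_mem_boundedBackwardSubmodule, fun _ => hconst.adjoint_apply_mem hT,
      fun _ => hconst.norm_apply_eq, fun _ => exists_apply_eq_of_mem_boundedBackwardSubmodule,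
      fun _ hx => (tendsto_norm_pow_adjoint_apply_of_mem_orthogonal hT hx).liminf_eq⟩
  · rintro ⟨K, hK, hTK, hTK', hiso, -, hC0⟩ xs hxs hC n
    have : CompleteSpace K := hK.completeSpace_coe
    have hmem : ∀ m, xs m ∈ K := IsBoundedBackwardSeq.mem_of_reduces ⟨hxs, hC⟩ hTK hTK'
      fun x hx => tendsto_norm_pow_apply_zero_of_liminf (norm_adjoint_apply_le hT) (hC0 x hx)
    induction n with
    | zero => rfl
    | succ n ih => rw [← ih, ← hxs n, hiso _ (hmem _)]

/-- For a contraction `T` on a complex separable Hilbert space, every bounded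
backward sequence of `T` has constant norms iff there is a closed subspace `H₂` reducing `T`
(invariant under `T` and `T*`) such that `T|_{H₂}` is unitary and `T|_{H₂ᗮ}` is of class `C·₀`
(its adjoint being `T*|_{H₂ᗮ}`). -/
theorem stmt_13
    {H : Type*} [NormedAddCommGroup H] [InnerProductSpace ℂ H] [CompleteSpace H]
    [TopologicalSpace.SeparableSpace H]
    (T : H →L[ℂ] H) (hT : ∀ x : H, ‖T x‖ ≤ ‖x‖) :
    (∀ xs : ℕ → H, (∀ n : ℕ, T (xs (n + 1)) = xs n) →
        (∃ C : ℝ, ∀ n : ℕ, ‖xs n‖ ≤ C) → ∀ n : ℕ, ‖xs n‖ = ‖xs 0‖) ↔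
    (∃ H₂ : Submodule ℂ H, IsClosed (H₂ : Set H) ∧
        (∀ x ∈ H₂, T x ∈ H₂) ∧
        (∀ x ∈ H₂, ContinuousLinearMap.adjoint T x ∈ H₂) ∧
        (∀ x ∈ H₂, ‖T x‖ = ‖x‖) ∧
        (∀ y ∈ H₂, ∃ x ∈ H₂, T x = y) ∧
        (∀ x ∈ H₂ᗮ, Filter.liminf
          (fun n : ℕ => ‖((ContinuousLinearMap.adjoint T) ^ n) x‖) Filter.atTop = 0)) :=
  stmt_13_general T hT
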